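/- Let τ and τ' be stopping times on a filtered probability space with τ < τ' on an event E, and assume τ' is predictable (announceable), i.e. there exist stopping times τ'_m ↑ τ' with τ'_m < τ'_{m+1} < τ' on {τ' > 0}. Then there exists a stopping time τ̄ satisfying τ < τ̄ < τ' on E. -/

import Mathlib

/-!
On `E` we have `τ' > τ ≥ 0`, so every `τ'_m` lies strictly below `τ'`, and since `τ'_m → τ'`
some `τ'_m` lies strictly above `τ`. Take `τ̄` to be the first `τ'_m` strictly above `τ`, and `τ`
itself when there is none, so that `τ ≤ τ̄` everywhere. The event that `m` is the first such index
is built from the events `{τ'_k ≤ τ}`, which lie in `ℱ_τ`; on it `τ ≤ τ̄ = τ'_m`, so its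
intersection with `{τ̄ ≤ t}` lies in `ℱ_t`. Hence `τ̄` is a stopping time.
-/

open MeasureTheory Filter

section FirstExceeding

variable {Ω α : Type*}

open Classical in
noncomputable def firstExceeding [LinearOrder α] (τ : Ω → α) (σ : ℕ → Ω → α) (ω : Ω) : α :=
  if h : ∃ m, τ ω < σ m ω then σ (Nat.find h) ω else τ ω

variable [LinearOrder α] {τ : Ω → α} {σ : ℕ → Ω → α} {ω : Ω}

lemma lt_firstExceeding (h : ∃ m, τ ω < σ m ω) : τ ω < firstExceeding τ σ ω := by
  classical
  rw [firstExceeding, dif_pos h]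
  exact Nat.find_spec h

lemma firstExceeding_lt {b : α} (h : ∃ m, τ ω < σ m ω) (hσ : ∀ m, σ m ω < b) :
    firstExceeding τ σ ω < b := by
  classical
  rw [firstExceeding, dif_pos h]
  exact hσ _

lemma firstExceeding_le_iff {t : α} :
    firstExceeding τ σ ω ≤ t ↔
      (∃ m, (τ ω < σ m ω ∧ ∀ k < m, σ k ω ≤ τ ω) ∧ σ m ω ≤ t) ∨
        ((∀ m, σ m ω ≤ τ ω) ∧ τ ω ≤ t) := by
  classical
  rw [firstExceeding]
  split_ifs with h
  · have hfind : ∀ m, Nat.find h = m ↔ τ ω < σ m ω ∧ ∀ k < m, σ k ω ≤ τ ω := fun m => by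
      simp only [Nat.find_eq_iff, not_lt]
    refine ⟨fun hle => Or.inl ⟨_, (hfind _).1 rfl, hle⟩, ?_⟩
    rintro (⟨m, hm, hle⟩ | ⟨hnone, -⟩)
    · rwa [(hfind m).2 hm]
    · obtain ⟨m, hm⟩ := h
      exact absurd hm (hnone m).not_gt
  · push Not at h
    simp [h, fun m => (h m).not_gt]

lemma StrictMono.map_firstExceeding {β : Type*} [LinearOrder β] {g : α → β}
    (hg : StrictMono g) :
    g (firstExceeding τ σ ω) = firstExceeding (fun ω => g (τ ω)) (fun m ω => g (σ m ω)) ω := by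
  classical
  by_cases h : ∃ m, τ ω < σ m ω
  · have hg_exists : ∃ m, g (τ ω) < g (σ m ω) := by simpa only [hg.lt_iff_lt] using h
    rw [firstExceeding, firstExceeding, dif_pos h, dif_pos hg_exists]
    congr 2
    exact Nat.find_congr' hg.lt_iff_lt.symm
  · have hg_exists : ¬∃ m, g (τ ω) < g (σ m ω) := by simpa only [hg.lt_iff_lt] using h
    rw [firstExceeding, firstExceeding, dif_neg h, dif_neg hg_exists]

end FirstExceeding

namespace MeasureTheory

variable {Ω ι : Type*} {m : MeasurableSpace Ω} {τ : Ω → WithTop ι}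

lemma IsStoppingTime.measurableSet_inter_le_of_le [Preorder ι] {f : Filtration ι m}
    {σ : Ω → WithTop ι} (hτ : IsStoppingTime f τ) (hσ : IsStoppingTime f σ) {s : Set Ω}
    (hs : MeasurableSet[hτ.measurableSpace] s) (hle : ∀ ω ∈ s, τ ω ≤ σ ω) (i : ι) :
    MeasurableSet[f i] (s ∩ {ω | σ ω ≤ i}) := by
  have hs_eq : s ∩ {ω | σ ω ≤ i} = (s ∩ {ω | τ ω ≤ i}) ∩ {ω | σ ω ≤ i} := by
    ext ω
    exact ⟨fun h => ⟨⟨h.1, (hle ω h.1).trans h.2⟩, h.2⟩, fun h => ⟨h.1.1, h.2⟩⟩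
  rw [hs_eq]
  exact (hs.2 i).inter (hσ i)

lemma isStoppingTime_firstExceeding [LinearOrder ι] [TopologicalSpace ι] [OrderTopology ι]
    [SecondCountableTopology ι] {f : Filtration ι m} {σ : ℕ → Ω → WithTop ι}
    (hτ : IsStoppingTime f τ) (hσ : ∀ n, IsStoppingTime f (σ n)) :
    IsStoppingTime f (firstExceeding τ σ) := by
  have hle : ∀ n, MeasurableSet[hτ.measurableSpace] {ω | σ n ω ≤ τ ω} := fun n =>
    (hσ n).measurableSet_stopping_time_le hτ
  have hlt : ∀ n, MeasurableSet[hτ.measurableSpace] {ω | τ ω < σ n ω} := fun n => by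
    simpa only [Set.compl_ofPred, not_le] using (hle n).compl
  intro i
  have hset : {ω | firstExceeding τ σ ω ≤ i} =
      (⋃ n, ({ω | τ ω < σ n ω} ∩ ⋂ k < n, {ω | σ k ω ≤ τ ω}) ∩ {ω | σ n ω ≤ i}) ∪
        ((⋂ n, {ω | σ n ω ≤ τ ω}) ∩ {ω | τ ω ≤ i}) := by
    ext ω
    simp [firstExceeding_le_iff]
  rw [hset]
  refine (MeasurableSet.iUnion fun n => ?_).union ((MeasurableSet.iInter hle).2 i)
  exact hτ.measurableSet_inter_le_of_le (hσ n)
    ((hlt n).inter (MeasurableSet.biInter (Set.to_countable _) fun k _ => hle k))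
    (fun ω hω => hω.1.le) i

end MeasureTheory

theorem stmt_17_general {Ω : Type*} {mΩ : MeasurableSpace Ω}
    (ℱ : Filtration ℝ mΩ)
    (τ τ' : Ω → ℝ)
    (hτ : IsStoppingTime ℱ (fun ω => (τ ω : WithTop ℝ)))
    (hτnonneg : ∀ ω, 0 ≤ τ ω)
    (E : Set Ω)
    (hlt : ∀ ω ∈ E, τ ω < τ' ω)
    (τm : ℕ → Ω → ℝ)
    (hτm : ∀ m, IsStoppingTime ℱ (fun ω => (τm m ω : WithTop ℝ)))
    (hτmlim : ∀ ω, Tendsto (fun m => τm m ω) atTop (nhds (τ' ω)))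
    (hτmmono : ∀ ω, 0 < τ' ω → ∀ m, τm m ω < τm (m + 1) ω ∧ τm (m + 1) ω < τ' ω) :
    ∃ τbar : Ω → ℝ, IsStoppingTime ℱ (fun ω => (τbar ω : WithTop ℝ)) ∧
      ∀ ω ∈ E, τ ω < τbar ω ∧ τbar ω < τ' ω := by
  refine ⟨firstExceeding τ τm, ?_, fun ω hω => ?_⟩
  · simpa only [WithTop.coe_strictMono.map_firstExceeding (β := WithTop ℝ)]
      using isStoppingTime_firstExceeding hτ hτm
  have hτ'_pos : 0 < τ' ω := (hτnonneg ω).trans_lt (hlt ω hω)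
  have hexists : ∃ m, τ ω < τm m ω := ((hτmlim ω).eventually_const_lt (hlt ω hω)).exists
  exact ⟨lt_firstExceeding hexists,
    firstExceeding_lt hexists fun m => (hτmmono ω hτ'_pos m).1.trans (hτmmono ω hτ'_pos m).2⟩

/-- If `τ < τ'` on an event `E` and `τ'` is predictable (announceable by stopping times
`τ'_m ↑ τ'` with `τ'_m < τ'_{m+1} < τ'` on `{τ' > 0}`), then there is a stopping time
`τ̄` with `τ < τ̄ < τ'` on `E`. -/
theorem stmt_17 {Ω : Type*} {mΩ : MeasurableSpace Ω} (μ : Measure Ω)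
    [IsProbabilityMeasure μ]
    (ℱ : Filtration ℝ mΩ)
    (τ τ' : Ω → ℝ)
    (hτ : IsStoppingTime ℱ (fun ω => (τ ω : WithTop ℝ))) (hτ' : IsStoppingTime ℱ (fun ω => (τ' ω : WithTop ℝ)))
    (hτnonneg : ∀ ω, 0 ≤ τ ω)
    (E : Set Ω) (hE : MeasurableSet E)
    (hlt : ∀ ω ∈ E, τ ω < τ' ω)
    (τm : ℕ → Ω → ℝ)
    (hτm : ∀ m, IsStoppingTime ℱ (fun ω => (τm m ω : WithTop ℝ)))
    (hτmlim : ∀ ω, Tendsto (fun m => τm m ω) atTop (nhds (τ' ω)))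
    (hτmmono : ∀ ω, 0 < τ' ω → ∀ m, τm m ω < τm (m + 1) ω ∧ τm (m + 1) ω < τ' ω) :
    ∃ τbar : Ω → ℝ, IsStoppingTime ℱ (fun ω => (τbar ω : WithTop ℝ)) ∧
      ∀ ω ∈ E, τ ω < τbar ω ∧ τbar ω < τ' ω :=
  stmt_17_general ℱ τ τ' hτ hτnonneg E hlt τm hτm hτmlim hτmmono
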